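/- Dyadic summation lemma: for every constant C* ≥ 1 there exists a constant C (depending only on C*) such that the following holds. Let T > 0, L > 0, M ≥ 1, A ≥ 0, let d_max := ⌊(1/2) log₂ T⌋ + 1 and w_d := 2^{-d}. Suppose nonnegative reals m_0, m_1, ..., m_{d_max} satisfy m_0 ≤ C* and, for every 1 ≤ d ≤ d_max, m_d ≤ C* · min{ 2^d, T w_d² / L, M + A √(w_d / L) }. Then ∑_{d=0}^{d_max} min{ √(T L m_d), L m_d / w_d } ≤ C ( √(T L M) + T^{1/3} L^{1/3} A^{2/3} ). -/

import Mathlib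

set_option maxHeartbeats 1000000
open Real Finset

lemma two_rpow_nat (c : ℝ) (d : ℕ) : (2:ℝ)^(c*(d:ℝ)) = ((2:ℝ)^c)^d := by
  rw [← Real.rpow_natCast ((2:ℝ)^c) d, ← Real.rpow_mul (by norm_num)]

lemma geom_min_sum (p q a b : ℝ) (hp : 0 < p) (hq : 0 < q)
    (ha : 0 ≤ a) (hb : 0 ≤ b) (N : ℕ) :
    ∑ d ∈ Finset.range N, min (a * (2:ℝ) ^ (p * (d:ℝ))) (b * (2:ℝ) ^ (-(q * (d:ℝ)))) ≤
      ((2:ℝ)^p/((2:ℝ)^p - 1) + 1/(1 - (2:ℝ)^(-q))) *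
        (a^(q/(p+q)) * b^(p/(p+q))) := by
  have hpq : 0 < p + q := by linarith
  have hr1 : 1 < (2:ℝ)^p := by
    rw [show (1:ℝ) = (2:ℝ)^(0:ℝ) by simp]
    exact Real.rpow_lt_rpow_left_iff (by norm_num) |>.mpr hp
  have hs0 : 0 < (2:ℝ)^(-q) := Real.rpow_pos_of_pos (by norm_num) _
  have hs1 : (2:ℝ)^(-q) < 1 := by
    rw [show (1:ℝ) = (2:ℝ)^(0:ℝ) by simp]
    exact Real.rpow_lt_rpow_left_iff (by norm_num) |>.mpr (by linarith)
  set K : ℝ := (2:ℝ)^p/((2:ℝ)^p - 1) + 1/(1 - (2:ℝ)^(-q)) with hK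
  have hKpos : 0 < K := by
    apply add_pos <;> apply div_pos <;> linarith
  set P : ℝ := a^(q/(p+q)) * b^(p/(p+q)) with hPdef
  have hP0 : 0 ≤ P := mul_nonneg (Real.rpow_nonneg ha _) (Real.rpow_nonneg hb _)
  rcases eq_or_lt_of_le ha with ha' | ha'
  · have hP : P = 0 := by
      rw [hPdef, ← ha', Real.zero_rpow (ne_of_gt (div_pos hq hpq)), zero_mul]
    rw [hP, mul_zero]
    apply Finset.sum_nonpos
    intro d _
    have : a * (2:ℝ)^(p*(d:ℝ)) = 0 := by rw [← ha', zero_mul]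
    exact le_trans (min_le_left _ _) (le_of_eq this)
  rcases eq_or_lt_of_le hb with hb' | hb'
  · have hP : P = 0 := by
      rw [hPdef, ← hb', Real.zero_rpow (ne_of_gt (div_pos hp hpq)), mul_zero]
    rw [hP, mul_zero]
    apply Finset.sum_nonpos
    intro d _
    have : b * (2:ℝ)^(-(q*(d:ℝ))) = 0 := by rw [← hb', zero_mul]
    exact le_trans (min_le_right _ _) (le_of_eq this)
  -- main case
  set t : ℝ := Real.logb 2 (b/a) / (p+q) with htdef
  set k : ℕ := ⌈t⌉₊ with hkdef
  have h2 : (2:ℝ) ^ ((p+q)*t) = b/a := by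
    rw [show (p+q)*t = Real.logb 2 (b/a) by rw [htdef]; field_simp]
    exact Real.rpow_logb (by norm_num) (by norm_num) (div_pos hb' ha')
  have e1 : (2:ℝ)^(p*t) = (b/a)^(p/(p+q)) := by
    rw [← h2, ← Real.rpow_mul (by norm_num)]
    congr 1; field_simp
  have e2 : (2:ℝ)^(q*t) = (b/a)^(q/(p+q)) := by
    rw [← h2, ← Real.rpow_mul (by norm_num)]
    congr 1; field_simp
  have ha1 : a^(q/(p+q)) * a^(p/(p+q)) = a := by
    rw [← Real.rpow_add ha',
      show q/(p+q)+p/(p+q) = 1 by rw [← add_div, add_comm]; exact div_self (ne_of_gt hpq),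
      Real.rpow_one]
  have hb1 : b^(p/(p+q)) * b^(q/(p+q)) = b := by
    rw [← Real.rpow_add hb',
      show p/(p+q)+q/(p+q) = 1 by rw [← add_div]; exact div_self (ne_of_gt hpq),
      Real.rpow_one]
  have haP : a * (2:ℝ)^(p*t) = P := by
    rw [e1, Real.div_rpow hb ha, hPdef]
    have h3 : (a:ℝ)^(p/(p+q)) ≠ 0 := ne_of_gt (Real.rpow_pos_of_pos ha' _)
    rw [show a * (b ^ (p/(p+q)) / a ^ (p/(p+q)))
        = (a / a ^ (p/(p+q))) * b ^ (p/(p+q)) by ring]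
    congr 1
    rw [show q/(p+q) = 1 - p/(p+q) by
        rw [eq_sub_iff_add_eq, ← add_div, add_comm]; exact div_self (ne_of_gt hpq),
      Real.rpow_sub ha', Real.rpow_one]
  have hbP : b * (2:ℝ)^(-(q*t)) = P := by
    rw [Real.rpow_neg (by norm_num : (0:ℝ) ≤ 2), e2, Real.div_rpow hb ha, hPdef, inv_div]
    have h3 : (b:ℝ)^(q/(p+q)) ≠ 0 := ne_of_gt (Real.rpow_pos_of_pos hb' _)
    rw [show b * (a ^ (q/(p+q)) / b ^ (q/(p+q)))
        = a ^ (q/(p+q)) * (b / b ^ (q/(p+q))) by ring]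
    congr 1
    rw [show p/(p+q) = 1 - q/(p+q) by
        rw [eq_sub_iff_add_eq, ← add_div]; exact div_self (ne_of_gt hpq),
      Real.rpow_sub hb', Real.rpow_one]
  -- split the sum
  have hterm : ∀ d ∈ Finset.range N,
      min (a * (2:ℝ)^(p*(d:ℝ))) (b * (2:ℝ)^(-(q*(d:ℝ)))) ≤
        (if d < k then a * (2:ℝ)^(p*(d:ℝ)) else 0) +
          (if k ≤ d then b * (2:ℝ)^(-(q*(d:ℝ))) else 0) := by
    intro d _
    by_cases hd : d < k
    · simp [hd, not_le_of_gt hd]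
    · simp [hd, not_lt.mp hd]
  refine le_trans (Finset.sum_le_sum hterm) ?_
  rw [Finset.sum_add_distrib]
  have hkt : t ≤ (k:ℝ) := Nat.le_ceil t
  have h2pos : (0:ℝ) < (2:ℝ)^p - 1 := by linarith
  have hspos : (0:ℝ) < 1 - (2:ℝ)^(-q) := by linarith
  have hS1 : (∑ d ∈ Finset.range N, if d < k then a * (2:ℝ)^(p*(d:ℝ)) else 0)
      ≤ (2:ℝ)^p/((2:ℝ)^p - 1) * P := by
    have hsub : (∑ d ∈ Finset.range N, if d < k then a * (2:ℝ)^(p*(d:ℝ)) else 0)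
        ≤ ∑ d ∈ Finset.range k, a * (2:ℝ)^(p*(d:ℝ)) := by
      rw [← Finset.sum_filter]
      apply Finset.sum_le_sum_of_subset_of_nonneg
      · intro d hd
        simp only [Finset.mem_filter, Finset.mem_range] at hd ⊢
        exact hd.2
      · intro d _ _
        positivity
    refine le_trans hsub ?_
    have hgeo : ∑ d ∈ Finset.range k, a * (2:ℝ)^(p*(d:ℝ))
        = a * ((((2:ℝ)^p)^k - 1)/((2:ℝ)^p - 1)) := by
      rw [← Finset.mul_sum]
      simp_rw [two_rpow_nat]
      rw [geom_sum_eq (ne_of_gt hr1)]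
    rw [hgeo]
    rcases Nat.eq_zero_or_pos k with hk0 | hkpos
    · rw [hk0]
      simp only [pow_zero, sub_self, zero_div, mul_zero]
      exact mul_nonneg (div_nonneg (by linarith) (by linarith)) hP0
    · have ht0 : 0 < t := by
        by_contra h
        push_neg at h
        have := Nat.ceil_eq_zero.mpr h
        rw [hkdef] at hkpos
        omega
      have hk1 : (k:ℝ) < t + 1 := Nat.ceil_lt_add_one (le_of_lt ht0)
      have hkey : a * ((2:ℝ)^p)^k ≤ (2:ℝ)^p * P := by
        have e3 : ((2:ℝ)^p)^k = (2:ℝ)^(p*(k:ℝ)) := (two_rpow_nat p k).symm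
        have e4 : (2:ℝ)^(p*(k:ℝ)) ≤ (2:ℝ)^(p*(t+1)) := by
          apply Real.rpow_le_rpow_left_iff (by norm_num : (1:ℝ) < 2) |>.mpr
          nlinarith
        have e5 : (2:ℝ)^(p*(t+1)) = (2:ℝ)^(p*t) * (2:ℝ)^p := by
          rw [show p*(t+1) = p*t + p by ring, Real.rpow_add (by norm_num)]
        calc a * ((2:ℝ)^p)^k ≤ a * ((2:ℝ)^(p*t) * (2:ℝ)^p) := by
              rw [e3, ← e5]; exact mul_le_mul_of_nonneg_left e4 ha
          _ = (2:ℝ)^p * (a * (2:ℝ)^(p*t)) := by ring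
          _ = (2:ℝ)^p * P := by rw [haP]
      rw [← mul_div_assoc, div_mul_eq_mul_div]
      apply (div_le_div_iff_of_pos_right h2pos).mpr
      have expand : a * (((2:ℝ)^p)^k - 1) = a * ((2:ℝ)^p)^k - a := by ring
      rw [expand]
      linarith [hkey, ha'.le]
  have hS2 : (∑ d ∈ Finset.range N, if k ≤ d then b * (2:ℝ)^(-(q*(d:ℝ))) else 0)
      ≤ 1/(1 - (2:ℝ)^(-q)) * P := by
    have hsub : (∑ d ∈ Finset.range N, if k ≤ d then b * (2:ℝ)^(-(q*(d:ℝ))) else 0)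
        ≤ ∑ d ∈ Finset.Ico k (max N k), b * (2:ℝ)^(-(q*(d:ℝ))) := by
      rw [← Finset.sum_filter]
      apply Finset.sum_le_sum_of_subset_of_nonneg
      · intro d hd
        simp only [Finset.mem_filter, Finset.mem_range, Finset.mem_Ico] at hd ⊢
        exact ⟨hd.2, lt_of_lt_of_le hd.1 (le_max_left N k)⟩
      · intro d _ _
        positivity
    refine le_trans hsub ?_
    have hgeo : ∑ d ∈ Finset.Ico k (max N k), b * (2:ℝ)^(-(q*(d:ℝ)))
        = b * ((((2:ℝ)^(-q))^(max N k) - ((2:ℝ)^(-q))^k)/((2:ℝ)^(-q) - 1)) := by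
      rw [← Finset.mul_sum]
      simp_rw [show ∀ d:ℕ, -(q*(d:ℝ)) = (-q)*(d:ℝ) by intro d; ring, two_rpow_nat]
      rw [geom_sum_Ico (ne_of_lt hs1) (le_max_right N k)]
    rw [hgeo]
    have hbk : b * ((2:ℝ)^(-q))^k ≤ P := by
      rw [show ((2:ℝ)^(-q))^k = (2:ℝ)^(-q*(k:ℝ)) from (two_rpow_nat (-q) k).symm]
      calc b * (2:ℝ)^(-q*(k:ℝ)) ≤ b * (2:ℝ)^(-(q*t)) := by
            apply mul_le_mul_of_nonneg_left ?_ hb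
            apply Real.rpow_le_rpow_left_iff (by norm_num : (1:ℝ) < 2) |>.mpr
            nlinarith
        _ = P := hbP
    have hsm : (0:ℝ) ≤ ((2:ℝ)^(-q))^(max N k) := by positivity
    have hflip : (((2:ℝ)^(-q))^(max N k) - ((2:ℝ)^(-q))^k)/((2:ℝ)^(-q) - 1)
        = (((2:ℝ)^(-q))^k - ((2:ℝ)^(-q))^(max N k))/(1 - (2:ℝ)^(-q)) := by
      rw [div_eq_div_iff (by linarith) (by linarith)]; ring
    rw [hflip, one_div, inv_mul_eq_div, ← mul_div_assoc]
    apply (div_le_div_iff_of_pos_right hspos).mpr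
    have expand : b * (((2:ℝ)^(-q))^k - ((2:ℝ)^(-q))^(max N k))
        = b * ((2:ℝ)^(-q))^k - b * ((2:ℝ)^(-q))^(max N k) := by ring
    rw [expand]
    linarith [hbk, mul_nonneg hb hsm]
  calc (∑ d ∈ Finset.range N, if d < k then a * (2:ℝ)^(p*(d:ℝ)) else 0)
        + (∑ d ∈ Finset.range N, if k ≤ d then b * (2:ℝ)^(-(q*(d:ℝ))) else 0)
      ≤ (2:ℝ)^p/((2:ℝ)^p - 1) * P + 1/(1 - (2:ℝ)^(-q)) * P := add_le_add hS1 hS2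
    _ = K * P := by rw [hK]; ring


lemma min_split (x y z : ℝ) (hx : 0 ≤ x) (hy : 0 ≤ y) (hz : 0 ≤ z) :
    min z (x + y) ≤ min x z + min y z := by
  rcases le_total x z with h|h <;> rcases le_total y z with h'|h' <;>
    simp only [min_def] <;> split_ifs <;> linarith

/-- **Dyadic summation lemma.** For every `C* ≥ 1` there is a constant `C` such that if
`d_max = ⌊(1/2) log₂ T⌋ + 1`, `w_d = 2^{-d}`, and nonnegative reals `m_0, ..., m_{d_max}`
satisfy `m_0 ≤ C*` and `m_d ≤ C* · min {2^d, T w_d² / L, M + A √(w_d / L)}` for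
`1 ≤ d ≤ d_max`, then
`∑_{d=0}^{d_max} min {√(T L m_d), L m_d / w_d} ≤ C (√(T L M) + T^{1/3} L^{1/3} A^{2/3})`. -/
theorem dyadic_summation (Cstar : ℝ) (hCstar : 1 ≤ Cstar) :
    ∃ C : ℝ, 0 < C ∧
      ∀ (T L M A : ℝ), 0 < T → 0 < L → 1 ≤ M → 0 ≤ A →
        ∀ m : ℕ → ℝ,
          (∀ d ≤ (⌊(1 / 2 : ℝ) * Real.logb 2 T⌋ + 1).toNat, 0 ≤ m d) →
          m 0 ≤ Cstar →
          (∀ d : ℕ, 1 ≤ d → d ≤ (⌊(1 / 2 : ℝ) * Real.logb 2 T⌋ + 1).toNat →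
            m d ≤ Cstar * min ((2 : ℝ) ^ d)
              (min (T * ((2 : ℝ) ^ d)⁻¹ ^ 2 / L)
                (M + A * Real.sqrt (((2 : ℝ) ^ d)⁻¹ / L)))) →
          (∑ d ∈ Finset.range ((⌊(1 / 2 : ℝ) * Real.logb 2 T⌋ + 1).toNat + 1),
              min (Real.sqrt (T * L * m d)) (L * m d / ((2 : ℝ) ^ d)⁻¹))
            ≤ C * (Real.sqrt (T * L * M) +
                T ^ ((1 : ℝ) / 3) * L ^ ((1 : ℝ) / 3) * A ^ ((2 : ℝ) / 3)) := by
  have hCpos : (0:ℝ) < Cstar := lt_of_lt_of_le one_pos hCstar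
  have hCquad : (0:ℝ) ≤ 4*Cstar^2 - 2*Cstar := by nlinarith [hCstar]
  set K1 : ℝ := (2:ℝ)^(1:ℝ)/((2:ℝ)^(1:ℝ) - 1) + 1/(1 - (2:ℝ)^(-(1:ℝ))) with hK1def
  set K2 : ℝ := (2:ℝ)^((1:ℝ)/2)/((2:ℝ)^((1:ℝ)/2) - 1) + 1/(1 - (2:ℝ)^(-((1:ℝ)/4))) with hK2def
  have h2half : (1:ℝ) < (2:ℝ)^((1:ℝ)/2) := by
    rw [show (1:ℝ) = (2:ℝ)^(0:ℝ) by simp]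
    exact Real.rpow_lt_rpow_left_iff (by norm_num) |>.mpr (by norm_num)
  have h2quarter : (2:ℝ)^(-((1:ℝ)/4)) < 1 := by
    rw [show (1:ℝ) = (2:ℝ)^(0:ℝ) by simp]
    exact Real.rpow_lt_rpow_left_iff (by norm_num) |>.mpr (by norm_num)
  have h2one : (2:ℝ)^(1:ℝ) = 2 := Real.rpow_one 2
  have h2neg : (2:ℝ)^(-(1:ℝ)) < 1 := by
    rw [show (1:ℝ) = (2:ℝ)^(0:ℝ) by simp]
    exact Real.rpow_lt_rpow_left_iff (by norm_num) |>.mpr (by norm_num)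
  have hK1pos : 0 < K1 := by
    rw [hK1def]
    apply add_pos
    · rw [h2one]; norm_num
    · apply div_pos one_pos; linarith
  have hK2pos : 0 < K2 := by
    rw [hK2def]
    apply add_pos
    · apply div_pos (by linarith) (by linarith)
    · apply div_pos one_pos; linarith
  refine ⟨Cstar * (1 + 2*K1 + 2*K2), by positivity, ?_⟩
  intro T L M A hT hL hM hA m hmnn hm0 hmd
  set D : ℕ := (⌊(1 / 2 : ℝ) * Real.logb 2 T⌋ + 1).toNat with hDdef
  -- abbreviations
  set X : ℝ := T ^ ((1:ℝ)/3) * L ^ ((1:ℝ)/3) * A ^ ((2:ℝ)/3) with hXdef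
  have hXnn : 0 ≤ X := by
    rw [hXdef]
    apply mul_nonneg (mul_nonneg (Real.rpow_nonneg hT.le _) (Real.rpow_nonneg hL.le _))
      (Real.rpow_nonneg hA _)
  have hSnn : 0 ≤ Real.sqrt (T*L*M) := Real.sqrt_nonneg _
  -- the comparison sequences
  set ua : ℝ := Cstar * (L*M) with huadef
  set ub : ℝ := Cstar * T with hubdef
  set va : ℝ := Cstar * (A * L^((1:ℝ)/2)) with hvadef
  set vb : ℝ := Cstar * (T^((1:ℝ)/2) * A^((1:ℝ)/2) * L^((1:ℝ)/4)) with hvbdef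
  have huann : 0 ≤ ua := by rw [huadef]; positivity
  have hubnn : 0 ≤ ub := by rw [hubdef]; positivity
  have hvann : 0 ≤ va := by
    rw [hvadef]; exact mul_nonneg hCpos.le (mul_nonneg hA (Real.rpow_nonneg hL.le _))
  have hvbnn : 0 ≤ vb := by
    rw [hvbdef]
    exact mul_nonneg hCpos.le (mul_nonneg (mul_nonneg (Real.rpow_nonneg hT.le _)
      (Real.rpow_nonneg hA _)) (Real.rpow_nonneg hL.le _))
  set U : ℕ → ℝ := fun d => min (ua * (2:ℝ)^((1:ℝ)*(d:ℝ))) (ub * (2:ℝ)^(-((1:ℝ)*(d:ℝ)))) with hUdef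
  set V : ℕ → ℝ := fun d =>
    min (va * (2:ℝ)^(((1:ℝ)/2)*(d:ℝ))) (vb * (2:ℝ)^(-(((1:ℝ)/4)*(d:ℝ)))) with hVdef
  have hUnn : ∀ d, 0 ≤ U d := fun d => le_min
    (mul_nonneg huann (Real.rpow_nonneg (by norm_num) _))
    (mul_nonneg hubnn (Real.rpow_nonneg (by norm_num) _))
  have hVnn : ∀ d, 0 ≤ V d := fun d => le_min
    (mul_nonneg hvann (Real.rpow_nonneg (by norm_num) _))
    (mul_nonneg hvbnn (Real.rpow_nonneg (by norm_num) _))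
  -- per-term bound for d ≥ 1
  have hstep : ∀ d : ℕ, 1 ≤ d → d ≤ D →
      min (Real.sqrt (T * L * m d)) (L * m d / ((2:ℝ)^d)⁻¹) ≤ 2 * U d + 2 * V d := by
    intro d hd1 hdD
    have h2dpos : (0:ℝ) < (2:ℝ)^(d:ℕ) := by positivity
    have hwpos : (0:ℝ) < ((2:ℝ)^(d:ℕ))⁻¹ := by positivity
    have ew : ((2:ℝ)^(d:ℕ))⁻¹ = (2:ℝ)^(-(d:ℝ)) := by
      rw [← Real.rpow_natCast 2 d, ← Real.rpow_neg (by norm_num)]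
    have hdiv : L * m d / ((2:ℝ)^d)⁻¹ = L * m d * (2:ℝ)^(d:ℕ) := by
      rw [div_eq_mul_inv, inv_inv]
    have hmnn' : 0 ≤ m d := hmnn d hdD
    -- decomposition of m d
    have hm : m d ≤ Cstar * min (T * ((2:ℝ)^d)⁻¹^2 / L)
        (M + A * Real.sqrt (((2:ℝ)^d)⁻¹ / L)) :=
      le_trans (hmd d hd1 hdD) (mul_le_mul_of_nonneg_left (min_le_right _ _) hCpos.le)
    set z : ℝ := T * ((2:ℝ)^d)⁻¹^2 / L with hzdef
    set y : ℝ := A * Real.sqrt (((2:ℝ)^d)⁻¹ / L) with hydef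
    have hznn : 0 ≤ z := by rw [hzdef]; positivity
    have hynn : 0 ≤ y := by rw [hydef]; exact mul_nonneg hA (Real.sqrt_nonneg _)
    set m1 : ℝ := Cstar * min M z with hm1def
    set m2 : ℝ := Cstar * min y z with hm2def
    have hm1nn : 0 ≤ m1 := mul_nonneg hCpos.le (le_min (by linarith) hznn)
    have hm2nn : 0 ≤ m2 := mul_nonneg hCpos.le (le_min hynn hznn)
    have hsplit : m d ≤ m1 + m2 := by
      refine le_trans hm ?_
      rw [hm1def, hm2def, ← mul_add]
      exact mul_le_mul_of_nonneg_left (min_split M y z (by linarith) hynn hznn) hCpos.le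
    -- key identity: L * √(w/L) = √L * √w
    have hkey1 : L * Real.sqrt (((2:ℝ)^d)⁻¹ / L)
        = L^((1:ℝ)/2) * (2:ℝ)^(-(((1:ℝ)/2)*(d:ℝ))) := by
      rw [Real.sqrt_div (le_of_lt hwpos) L,
        show L * (Real.sqrt (((2:ℝ)^d)⁻¹) / Real.sqrt L)
          = (L / Real.sqrt L) * Real.sqrt (((2:ℝ)^d)⁻¹) by ring,
        Real.div_sqrt, ew, Real.sqrt_eq_rpow L, Real.sqrt_eq_rpow,
        ← Real.rpow_mul (by norm_num : (0:ℝ) ≤ 2),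
        show -(d:ℝ)*(1/2) = -(((1:ℝ)/2)*(d:ℝ)) by ring]
    rcases le_total m2 m1 with hcase | hcase
    · -- M-dominated case: use the linear branch and U
      have hmle : m d ≤ 2 * m1 := by linarith only [hsplit, hcase]
      have hlin : L * m d * (2:ℝ)^(d:ℕ) ≤ 2 * U d := by
        have hb1 : L * m1 * (2:ℝ)^(d:ℕ) ≤ ua * (2:ℝ)^((1:ℝ)*(d:ℝ)) := by
          rw [show (1:ℝ)*(d:ℝ) = (d:ℝ) by ring, Real.rpow_natCast 2 d, huadef]
          have : m1 ≤ Cstar * M := mul_le_mul_of_nonneg_left (min_le_left _ _) hCpos.le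
          calc L * m1 * (2:ℝ)^(d:ℕ) ≤ L * (Cstar * M) * (2:ℝ)^(d:ℕ) := by
                apply mul_le_mul_of_nonneg_right (mul_le_mul_of_nonneg_left this hL.le) h2dpos.le
            _ = Cstar * (L*M) * (2:ℝ)^(d:ℕ) := by ring
        have hb2 : L * m1 * (2:ℝ)^(d:ℕ) ≤ ub * (2:ℝ)^(-((1:ℝ)*(d:ℝ))) := by
          rw [show -((1:ℝ)*(d:ℝ)) = -(d:ℝ) by ring, ← ew, hubdef]
          have : m1 ≤ Cstar * z := mul_le_mul_of_nonneg_left (min_le_right _ _) hCpos.le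
          calc L * m1 * (2:ℝ)^(d:ℕ) ≤ L * (Cstar * z) * (2:ℝ)^(d:ℕ) := by
                apply mul_le_mul_of_nonneg_right (mul_le_mul_of_nonneg_left this hL.le) h2dpos.le
            _ = Cstar * T * ((2:ℝ)^d)⁻¹ := by
                rw [hzdef]; field_simp
        have hmin : L * m1 * (2:ℝ)^(d:ℕ) ≤ U d := le_min hb1 hb2
        calc L * m d * (2:ℝ)^(d:ℕ) ≤ L * (2*m1) * (2:ℝ)^(d:ℕ) := by
              apply mul_le_mul_of_nonneg_right (mul_le_mul_of_nonneg_left hmle hL.le) h2dpos.le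
          _ = 2 * (L * m1 * (2:ℝ)^(d:ℕ)) := by ring
          _ ≤ 2 * U d := by linarith only [hmin]
      calc min (Real.sqrt (T * L * m d)) (L * m d / ((2:ℝ)^d)⁻¹)
            ≤ L * m d / ((2:ℝ)^d)⁻¹ := min_le_right _ _
        _ = L * m d * (2:ℝ)^(d:ℕ) := hdiv
        _ ≤ 2 * U d := hlin
        _ ≤ 2 * U d + 2 * V d := by linarith only [hVnn d]
    · -- A-dominated case: use V
      have hmle : m d ≤ 2 * m2 := by linarith only [hsplit, hcase]
      have hm2y : m2 ≤ Cstar * y := mul_le_mul_of_nonneg_left (min_le_left _ _) hCpos.le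
      have sqT : (T^((1:ℝ)/2))^(2:ℕ) = T := by
        rw [← Real.rpow_natCast (T^((1:ℝ)/2)) 2, ← Real.rpow_mul hT.le]; norm_num
      have sqA : (A^((1:ℝ)/2))^(2:ℕ) = A := by
        rw [← Real.rpow_natCast (A^((1:ℝ)/2)) 2, ← Real.rpow_mul hA]; norm_num
      have sqL4 : (L^((1:ℝ)/4))^(2:ℕ) = L^((1:ℝ)/2) := by
        rw [← Real.rpow_natCast (L^((1:ℝ)/4)) 2, ← Real.rpow_mul hL.le]; norm_num
      have sq2 : ((2:ℝ)^(-(((1:ℝ)/4)*(d:ℝ))))^(2:ℕ) = (2:ℝ)^(-(((1:ℝ)/2)*(d:ℝ))) := by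
        rw [← Real.rpow_natCast ((2:ℝ)^(-(((1:ℝ)/4)*(d:ℝ)))) 2,
          ← Real.rpow_mul (by norm_num : (0:ℝ) ≤ 2)]
        congr 1; push_cast; ring
      have hy2 : L * y = A * (L^((1:ℝ)/2) * (2:ℝ)^(-(((1:ℝ)/2)*(d:ℝ)))) := by
        rw [hydef, show L * (A * Real.sqrt (((2:ℝ)^d)⁻¹ / L))
          = A * (L * Real.sqrt (((2:ℝ)^d)⁻¹ / L)) by ring, hkey1]
      have e2half : (2:ℝ)^(-(((1:ℝ)/2)*(d:ℝ))) * (2:ℝ)^(d:ℕ) = (2:ℝ)^(((1:ℝ)/2)*(d:ℝ)) := by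
        rw [← Real.rpow_natCast 2 d, ← Real.rpow_add (by norm_num : (0:ℝ) < 2)]
        congr 1; ring
      have hbase_nn : (0:ℝ) ≤ A * (L^((1:ℝ)/2) * (2:ℝ)^(-(((1:ℝ)/2)*(d:ℝ)))) := by
        apply mul_nonneg hA
        exact mul_nonneg (Real.rpow_nonneg hL.le _) (Real.rpow_nonneg (by norm_num) _)
      have hVge : min (Real.sqrt (T * L * m d)) (L * m d * (2:ℝ)^(d:ℕ)) ≤ 2 * V d := by
        rw [hVdef]
        apply le_trans (le_min ?_ ?_)
          (le_of_eq (mul_min_of_nonneg _ _ (by norm_num : (0:ℝ) ≤ 2)).symm)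
        · -- linear branch ≤ 2 * va * 2^{d/2}
          apply le_trans (min_le_right _ _)
          have step1 : L * m d * (2:ℝ)^(d:ℕ) ≤ 2 * Cstar * (L * y) * (2:ℝ)^(d:ℕ) := by
            apply mul_le_mul_of_nonneg_right ?_ h2dpos.le
            calc L * m d ≤ L * (2*m2) := mul_le_mul_of_nonneg_left hmle hL.le
              _ ≤ L * (2*(Cstar*y)) := mul_le_mul_of_nonneg_left (by linarith only [hm2y]) hL.le
              _ = 2 * Cstar * (L * y) := by ring
          refine le_trans step1 (le_of_eq ?_)
          rw [hy2, hvadef]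
          calc 2 * Cstar * (A * (L^((1:ℝ)/2) * (2:ℝ)^(-(((1:ℝ)/2)*(d:ℝ))))) * (2:ℝ)^(d:ℕ)
              = 2 * (Cstar * (A * L^((1:ℝ)/2)))
                * ((2:ℝ)^(-(((1:ℝ)/2)*(d:ℝ))) * (2:ℝ)^(d:ℕ)) := by ring
            _ = 2 * (Cstar * (A * L^((1:ℝ)/2)) * (2:ℝ)^(((1:ℝ)/2)*(d:ℝ))) := by
                rw [e2half]; ring
        · -- sqrt branch ≤ 2 * vb * 2^{-d/4}
          apply le_trans (min_le_left _ _)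
          rw [Real.sqrt_le_iff]
          constructor
          · have : (0:ℝ) ≤ vb * (2:ℝ)^(-(((1:ℝ)/4)*(d:ℝ))) :=
              mul_nonneg hvbnn (Real.rpow_nonneg (by norm_num) _)
            linarith only [this]
          · have hb : T * L * m d ≤ 2 * Cstar * (T * (L * y)) := by
              calc T * L * m d ≤ T * L * (2*m2) :=
                    mul_le_mul_of_nonneg_left hmle (by positivity)
                _ ≤ T * L * (2*(Cstar * y)) := by
                    apply mul_le_mul_of_nonneg_left (by linarith only [hm2y]) (by positivity)
                _ = 2 * Cstar * (T * (L * y)) := by ring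
            have hsq : (2 * (vb * (2:ℝ)^(-(((1:ℝ)/4)*(d:ℝ)))))^(2:ℕ)
                = 4 * Cstar^2 * (T * (A * (L^((1:ℝ)/2) * (2:ℝ)^(-(((1:ℝ)/2)*(d:ℝ)))))) := by
              rw [hvbdef,
                show (2 * (Cstar * (T^((1:ℝ)/2) * A^((1:ℝ)/2) * L^((1:ℝ)/4)) *
                    (2:ℝ)^(-(((1:ℝ)/4)*(d:ℝ)))))^(2:ℕ)
                  = 4 * Cstar^2 * ((T^((1:ℝ)/2))^(2:ℕ) * ((A^((1:ℝ)/2))^(2:ℕ) *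
                    ((L^((1:ℝ)/4))^(2:ℕ) * ((2:ℝ)^(-(((1:ℝ)/4)*(d:ℝ))))^(2:ℕ)))) by ring,
                sqT, sqA, sqL4, sq2]
            rw [hsq]
            rw [hy2] at hb
            have h1 : (0:ℝ) ≤ (4*Cstar^2 - 2*Cstar) *
                (T * (A * (L^((1:ℝ)/2) * (2:ℝ)^(-(((1:ℝ)/2)*(d:ℝ)))))) :=
              mul_nonneg hCquad (mul_nonneg hT.le hbase_nn)
            linarith only [hb, h1]
      calc min (Real.sqrt (T * L * m d)) (L * m d / ((2:ℝ)^d)⁻¹)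
            = min (Real.sqrt (T * L * m d)) (L * m d * (2:ℝ)^(d:ℕ)) := by rw [hdiv]
        _ ≤ 2 * V d := hVge
        _ ≤ 2 * U d + 2 * V d := by linarith only [hUnn d]
  -- d = 0 term
  have hf0 : min (Real.sqrt (T * L * m 0)) (L * m 0 / ((2:ℝ)^(0:ℕ))⁻¹)
      ≤ Cstar * Real.sqrt (T*L*M) := by
    apply le_trans (min_le_left _ _)
    have h1 : T*L*m 0 ≤ Cstar^2*(T*L*M) := by
      have : m 0 ≤ Cstar^2 * M := by
        calc m 0 ≤ Cstar := hm0
          _ ≤ Cstar * Cstar := le_mul_of_one_le_left hCpos.le hCstar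
          _ ≤ Cstar * Cstar * M := le_mul_of_one_le_right (by positivity) hM
          _ = Cstar^2 * M := by rw [sq]
      calc T*L*m 0 ≤ T*L*(Cstar^2*M) :=
            mul_le_mul_of_nonneg_left this (by positivity)
        _ = Cstar^2*(T*L*M) := by ring
    calc Real.sqrt (T*L*m 0) ≤ Real.sqrt (Cstar^2*(T*L*M)) := Real.sqrt_le_sqrt h1
      _ = Cstar * Real.sqrt (T*L*M) := by
          rw [Real.sqrt_mul (sq_nonneg Cstar), Real.sqrt_sq hCpos.le]
  -- sums of U and V
  have hUsum : ∑ d ∈ Finset.range (D+1), U d ≤ K1 * (Cstar * Real.sqrt (T*L*M)) := by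
    have h := geom_min_sum 1 1 ua ub one_pos one_pos huann hubnn (D+1)
    have heq : ua^((1:ℝ)/(1+1)) * ub^((1:ℝ)/(1+1)) = Cstar * Real.sqrt (T*L*M) := by
      rw [show (1:ℝ)/(1+1) = 1/2 by norm_num, huadef, hubdef,
        ← Real.mul_rpow (by positivity) (by positivity),
        show Cstar*(L*M)*(Cstar*T) = Cstar^2*(T*L*M) by ring,
        ← Real.sqrt_eq_rpow, Real.sqrt_mul (sq_nonneg Cstar), Real.sqrt_sq hCpos.le]
    rw [hUdef]
    rw [heq] at h
    exact h
  have hVsum : ∑ d ∈ Finset.range (D+1), V d ≤ K2 * (Cstar * X) := by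
    have h := geom_min_sum ((1:ℝ)/2) ((1:ℝ)/4) va vb (by norm_num) (by norm_num)
      hvann hvbnn (D+1)
    have he1 : (1:ℝ)/4/((1:ℝ)/2+(1:ℝ)/4) = 1/3 := by norm_num
    have he2 : (1:ℝ)/2/((1:ℝ)/2+(1:ℝ)/4) = 2/3 := by norm_num
    rw [he1, he2] at h
    have heq : va^((1:ℝ)/3) * vb^((2:ℝ)/3) = Cstar * X := by
      rw [hvadef, hvbdef, hXdef,
        Real.mul_rpow hCpos.le (mul_nonneg hA (Real.rpow_nonneg hL.le _)),
        Real.mul_rpow hA (Real.rpow_nonneg hL.le _),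
        Real.mul_rpow hCpos.le (mul_nonneg (mul_nonneg (Real.rpow_nonneg hT.le _)
          (Real.rpow_nonneg hA _)) (Real.rpow_nonneg hL.le _)),
        Real.mul_rpow (mul_nonneg (Real.rpow_nonneg hT.le _) (Real.rpow_nonneg hA _))
          (Real.rpow_nonneg hL.le _),
        Real.mul_rpow (Real.rpow_nonneg hT.le _) (Real.rpow_nonneg hA _),
        ← Real.rpow_mul hL.le, ← Real.rpow_mul hT.le, ← Real.rpow_mul hA,
        ← Real.rpow_mul hL.le]
      rw [show Cstar^((1:ℝ)/3) * (A^((1:ℝ)/3) * L^((1:ℝ)/2*(1/3))) *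
          (Cstar^((2:ℝ)/3) * (T^((1:ℝ)/2*(2/3)) * A^((1:ℝ)/2*(2/3)) * L^((1:ℝ)/4*(2/3))))
        = (Cstar^((1:ℝ)/3) * Cstar^((2:ℝ)/3)) * ((A^((1:ℝ)/3) * A^((1:ℝ)/2*(2/3))) *
          ((L^((1:ℝ)/2*(1/3)) * L^((1:ℝ)/4*(2/3))) * T^((1:ℝ)/2*(2/3)))) by ring,
        ← Real.rpow_add hCpos, ← Real.rpow_add' hA (by norm_num), ← Real.rpow_add hL]
      norm_num
      exact Or.inl (by ring)
    rw [hVdef]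
    rw [heq] at h
    exact h
  -- assemble
  rw [Finset.sum_range_succ']
  have hmid : ∑ i ∈ Finset.range D,
      min (Real.sqrt (T * L * m (i+1))) (L * m (i+1) / ((2:ℝ)^(i+1))⁻¹)
      ≤ 2 * (∑ d ∈ Finset.range (D+1), U d) + 2 * (∑ d ∈ Finset.range (D+1), V d) := by
    calc ∑ i ∈ Finset.range D,
        min (Real.sqrt (T * L * m (i+1))) (L * m (i+1) / ((2:ℝ)^(i+1))⁻¹)
        ≤ ∑ i ∈ Finset.range D, (2 * U (i+1) + 2 * V (i+1)) := by
          apply Finset.sum_le_sum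
          intro i hi
          simp only [Finset.mem_range] at hi
          exact hstep (i+1) (by omega) (by omega)
      _ = 2 * (∑ i ∈ Finset.range D, U (i+1)) + 2 * (∑ i ∈ Finset.range D, V (i+1)) := by
          rw [Finset.sum_add_distrib, ← Finset.mul_sum, ← Finset.mul_sum]
      _ ≤ 2 * (∑ d ∈ Finset.range (D+1), U d) + 2 * (∑ d ∈ Finset.range (D+1), V d) := by
          have hU' : (∑ i ∈ Finset.range D, U (i+1)) ≤ ∑ d ∈ Finset.range (D+1), U d := by
            rw [Finset.sum_range_succ' U D]
            exact le_add_of_nonneg_right (hUnn 0)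
          have hV' : (∑ i ∈ Finset.range D, V (i+1)) ≤ ∑ d ∈ Finset.range (D+1), V d := by
            rw [Finset.sum_range_succ' V D]
            exact le_add_of_nonneg_right (hVnn 0)
          linarith only [hU', hV']
  have htotal := add_le_add hmid hf0
  refine le_trans htotal ?_
  have e1 : 2 * (∑ d ∈ Finset.range (D+1), U d) ≤ 2 * (K1 * (Cstar * Real.sqrt (T*L*M))) := by
    linarith [hUsum]
  have e2 : 2 * (∑ d ∈ Finset.range (D+1), V d) ≤ 2 * (K2 * (Cstar * X)) := by
    linarith [hVsum]
  have hfin : 2 * (K1 * (Cstar * Real.sqrt (T*L*M))) + 2 * (K2 * (Cstar * X))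
      + Cstar * Real.sqrt (T*L*M)
      ≤ Cstar * (1 + 2*K1 + 2*K2) * (Real.sqrt (T*L*M) + X) := by
    have h1 : 0 ≤ 2*K2 * (Cstar * Real.sqrt (T*L*M)) :=
      mul_nonneg (by linarith only [hK2pos]) (mul_nonneg hCpos.le hSnn)
    have h2 : 0 ≤ Cstar * X := mul_nonneg hCpos.le hXnn
    have h3 : 0 ≤ 2*K1 * (Cstar * X) :=
      mul_nonneg (by linarith only [hK1pos]) (mul_nonneg hCpos.le hXnn)
    have hexp : Cstar * (1 + 2*K1 + 2*K2) * (Real.sqrt (T*L*M) + X)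
        = (2 * (K1 * (Cstar * Real.sqrt (T*L*M))) + 2 * (K2 * (Cstar * X))
          + Cstar * Real.sqrt (T*L*M))
          + (2*K2 * (Cstar * Real.sqrt (T*L*M)) + Cstar * X + 2*K1 * (Cstar * X)) := by
      ring
    rw [hexp]
    linarith only [h1, h2, h3]
  linarith only [e1, e2, hfin]
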